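/- arXiv:2505.05213 — 2 statements merged into one kernel-verified Lean document; each statement's English description precedes it below -/
import Mathlib

section
/- A graph is a bicluster graph (a disjoint union of complete bipartite graphs) if and only if it contains neither a triangle C3 nor a path P4 on four vertices as an induced subgraph. -/
/-- `G` restricted to the vertex set `s` is a complete bipartite graph:
`s` is partitioned into two sets `A` and `B` and, within `s`, adjacency holds
exactly between `A` and `B`. -/
def IsCompleteBipartiteOn {V : Type*} (G : SimpleGraph V) (s : Set V) : Prop :=
  ∃ A B : Set V, A ∪ B = s ∧ Disjoint A B ∧
    ∀ u ∈ s, ∀ v ∈ s, (G.Adj u v ↔ (u ∈ A ∧ v ∈ B) ∨ (u ∈ B ∧ v ∈ A))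

/-- A bicluster graph: every connected component is a complete bipartite graph. -/
def IsBicluster {V : Type*} (G : SimpleGraph V) : Prop :=
  ∀ c : G.ConnectedComponent, IsCompleteBipartiteOn G c.supp

private lemma key_walk {V : Type*} {G : SimpleGraph V}
    (hT : ¬ ∃ a b c : V, G.Adj a b ∧ G.Adj b c ∧ G.Adj c a)
    (hP : ¬ ∃ a b c d : V, G.Adj a b ∧ G.Adj b c ∧ G.Adj c d ∧
        ¬ G.Adj a c ∧ ¬ G.Adj b d ∧ ¬ G.Adj a d ∧ a ≠ c ∧ b ≠ d ∧ a ≠ d)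
    (r : V) {u v : V} (w : G.Walk u v) :
    v = r → u = r ∨ G.Adj r u ∨ ∃ b, G.Adj r b ∧ G.Adj b u := by
  induction w with
  | nil => exact fun hv => Or.inl hv
  | @cons u x v h p ih =>
    intro hv
    by_cases hu : u = r
    · exact Or.inl hu
    by_cases hru : G.Adj r u
    · exact Or.inr (Or.inl hru)
    rcases ih hv with hx | hrx | ⟨b, hrb, hbx⟩
    · subst hx; exact absurd h.symm hru
    · exact Or.inr (Or.inr ⟨x, hrx, h.symm⟩)
    · by_cases hxr : x = r
      · subst hxr; exact absurd h.symm hru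
      by_cases hrx : G.Adj r x
      · exact Or.inr (Or.inr ⟨x, hrx, h.symm⟩)
      by_cases hub : G.Adj u b
      · exact Or.inr (Or.inr ⟨b, hrb, hub.symm⟩)
      exact absurd ⟨u, x, b, r, h, hbx.symm, hrb.symm, hub,
        fun h' => hrx h'.symm, fun h' => hru h'.symm,
        fun he => hru (by rw [he]; exact hrb), hxr, hu⟩ hP

private lemma key_reach {V : Type*} {G : SimpleGraph V}
    (hT : ¬ ∃ a b c : V, G.Adj a b ∧ G.Adj b c ∧ G.Adj c a)
    (hP : ¬ ∃ a b c d : V, G.Adj a b ∧ G.Adj b c ∧ G.Adj c d ∧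
        ¬ G.Adj a c ∧ ¬ G.Adj b d ∧ ¬ G.Adj a d ∧ a ≠ c ∧ b ≠ d ∧ a ≠ d)
    {r u : V} (h : G.Reachable u r) :
    u = r ∨ G.Adj r u ∨ ∃ b, G.Adj r b ∧ G.Adj b u :=
  h.elim fun w => key_walk hT hP r w rfl

/-- A graph is a bicluster graph iff it has no triangle `C₃` and no induced `P₄`. -/
theorem stmt_0 {V : Type*} (G : SimpleGraph V) :
    IsBicluster G ↔
      (¬ ∃ a b c : V, G.Adj a b ∧ G.Adj b c ∧ G.Adj c a) ∧
      (¬ ∃ a b c d : V, G.Adj a b ∧ G.Adj b c ∧ G.Adj c d ∧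
        ¬ G.Adj a c ∧ ¬ G.Adj b d ∧ ¬ G.Adj a d ∧ a ≠ c ∧ b ≠ d ∧ a ≠ d) := by
  constructor
  · intro hB
    constructor
    · rintro ⟨a, b, c, hab, hbc, hca⟩
      obtain ⟨A, B, hAB, hdis, hadj⟩ := hB (G.connectedComponentMk a)
      have ha : a ∈ (G.connectedComponentMk a).supp :=
        (SimpleGraph.ConnectedComponent.mem_supp_iff _ _).2 rfl
      have hb : b ∈ (G.connectedComponentMk a).supp :=
        (SimpleGraph.ConnectedComponent.mem_supp_iff _ _).2
          (SimpleGraph.ConnectedComponent.eq.2 hab.symm.reachable)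
      have hc : c ∈ (G.connectedComponentMk a).supp :=
        (SimpleGraph.ConnectedComponent.mem_supp_iff _ _).2
          (SimpleGraph.ConnectedComponent.eq.2 hca.reachable)
      have h1 := (hadj a ha b hb).1 hab
      have h2 := (hadj b hb c hc).1 hbc
      have h3 := (hadj c hc a ha).1 hca
      rcases h1 with ⟨haA, hbB⟩ | ⟨haB, hbA⟩ <;>
        rcases h2 with ⟨hbA', hcB⟩ | ⟨hbB', hcA⟩ <;>
        rcases h3 with ⟨hcA', haB'⟩ | ⟨hcB', haA'⟩ <;>
        first
          | exact Set.disjoint_left.1 hdis ‹a ∈ A› ‹a ∈ B›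
          | exact Set.disjoint_left.1 hdis ‹b ∈ A› ‹b ∈ B›
          | exact Set.disjoint_left.1 hdis ‹c ∈ A› ‹c ∈ B›
    · rintro ⟨a, b, c, d, hab, hbc, hcd, hac, hbd, had, hac', hbd', had'⟩
      obtain ⟨A, B, hAB, hdis, hadj⟩ := hB (G.connectedComponentMk a)
      have ha : a ∈ (G.connectedComponentMk a).supp :=
        (SimpleGraph.ConnectedComponent.mem_supp_iff _ _).2 rfl
      have hb : b ∈ (G.connectedComponentMk a).supp :=
        (SimpleGraph.ConnectedComponent.mem_supp_iff _ _).2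
          (SimpleGraph.ConnectedComponent.eq.2 hab.symm.reachable)
      have hc : c ∈ (G.connectedComponentMk a).supp :=
        (SimpleGraph.ConnectedComponent.mem_supp_iff _ _).2
          (SimpleGraph.ConnectedComponent.eq.2 (hab.reachable.trans hbc.reachable).symm)
      have hd : d ∈ (G.connectedComponentMk a).supp :=
        (SimpleGraph.ConnectedComponent.mem_supp_iff _ _).2
          (SimpleGraph.ConnectedComponent.eq.2
            ((hab.reachable.trans hbc.reachable).trans hcd.reachable).symm)
      have h1 := (hadj a ha b hb).1 hab
      have h2 := (hadj b hb c hc).1 hbc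
      have h3 := (hadj c hc d hd).1 hcd
      have goal : G.Adj a d := by
        rcases h1 with ⟨haA, hbB⟩ | ⟨haB, hbA⟩ <;>
          rcases h2 with ⟨hbA', hcB⟩ | ⟨hbB', hcA⟩ <;>
          rcases h3 with ⟨hcA', hdB⟩ | ⟨hcB', hdA⟩ <;>
          first
            | exact absurd rfl (Set.disjoint_left.1 hdis ‹b ∈ A› ‹b ∈ B› ▸ fun h => h)
            | exact (Set.disjoint_left.1 hdis ‹b ∈ A› ‹b ∈ B›).elim
            | exact (Set.disjoint_left.1 hdis ‹c ∈ A› ‹c ∈ B›).elim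
            | exact (hadj a ha d hd).2 (Or.inl ⟨‹a ∈ A›, ‹d ∈ B›⟩)
            | exact (hadj a ha d hd).2 (Or.inr ⟨‹a ∈ B›, ‹d ∈ A›⟩)
      exact had goal
  · rintro ⟨hT, hP⟩ c
    obtain ⟨r, hr⟩ := c.exists_rep
    have hsupp : ∀ x, x ∈ c.supp → G.Reachable x r := by
      intro x hx
      have := (SimpleGraph.ConnectedComponent.mem_supp_iff _ _).1 hx
      exact SimpleGraph.ConnectedComponent.eq.1 (this.trans hr.symm)
    refine ⟨{u | u ∈ c.supp ∧ ¬ G.Adj r u}, {u | u ∈ c.supp ∧ G.Adj r u}, ?_, ?_, ?_⟩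
    · ext u
      simp only [Set.mem_union, Set.mem_setOf_eq]
      tauto
    · rw [Set.disjoint_left]
      rintro u ⟨_, h1⟩ ⟨_, h2⟩
      exact h1 h2
    · have main : ∀ x y, x ∈ c.supp → ¬ G.Adj r x → G.Adj r y → G.Adj x y := by
        intro x y hx hnx hry
        by_cases hxr : x = r
        · subst hxr; exact hry
        rcases key_reach hT hP (hsupp x hx) with h | h | ⟨b, hrb, hbx⟩
        · exact absurd h hxr
        · exact absurd h hnx
        · by_cases hby : b = y
          · subst hby; exact hbx.symm
          by_contra hxy
          have hnby : ¬ G.Adj b y := fun h => hT ⟨r, b, y, hrb, h, hry.symm⟩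
          have hxny : x ≠ y := fun h => hnx (by rw [h]; exact hry)
          exact hP ⟨x, b, r, y, hbx.symm, hrb.symm, hry,
            fun h => hnx h.symm, hnby, hxy, hxr, hby, hxny⟩
      intro u hu w hw
      constructor
      · intro huw
        by_cases hru : G.Adj r u <;> by_cases hrw : G.Adj r w
        · exact absurd ⟨r, u, w, hru, huw, hrw.symm⟩ hT
        · exact Or.inr ⟨⟨hu, hru⟩, ⟨hw, hrw⟩⟩
        · exact Or.inl ⟨⟨hu, hru⟩, ⟨hw, hrw⟩⟩
        · rcases key_reach hT hP (hsupp w hw) with h | h | ⟨b, hrb, hbw⟩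
          · exact absurd (h ▸ huw).symm hru
          · exact absurd h hrw
          by_cases hub : G.Adj u b
          · exact absurd ⟨u, b, w, hub, hbw, huw.symm⟩ hT
          have hur : u ≠ r := fun h => hrw (h ▸ huw)
          have hwr : w ≠ r := fun h => hru (h ▸ huw.symm)
          have hub' : u ≠ b := fun h => hru (by rw [h]; exact hrb)
          exact absurd ⟨u, w, b, r, huw, hbw.symm, hrb.symm, hub,
            fun h => hrw h.symm, fun h => hru h.symm, hub', hwr, hur⟩ hP
      · rintro (⟨⟨_, hru⟩, ⟨_, hrw⟩⟩ | ⟨⟨_, hru⟩, ⟨_, hrw⟩⟩)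
        · exact main u w hu hru hrw
        · exact (main w u hw hrw hru).symm
end

section
/- A connected graph on at least two vertices is a complete bipartite graph if and only if it contains no induced P4 and no triangle. -/
/-- A connected graph on at least two vertices is a complete bipartite graph iff it
contains no triangle and no induced `P₄`. -/
theorem stmt_10 {V : Type*} [Fintype V] (G : SimpleGraph V)
    (hconn : G.Connected) (hcard : 2 ≤ Fintype.card V) :
    IsCompleteBipartiteOn G Set.univ ↔
      (¬ ∃ a b c : V, G.Adj a b ∧ G.Adj b c ∧ G.Adj c a) ∧
      (¬ ∃ a b c d : V, G.Adj a b ∧ G.Adj b c ∧ G.Adj c d ∧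
        ¬ G.Adj a c ∧ ¬ G.Adj b d ∧ ¬ G.Adj a d ∧ a ≠ c ∧ b ≠ d ∧ a ≠ d) := by
  constructor
  · rintro ⟨A, B, hAB, hdisj, hadj⟩
    have hd : ∀ x, x ∈ A → x ∉ B := fun x hx => Set.disjoint_left.mp hdisj hx
    have h : ∀ u v : V, G.Adj u v ↔ (u ∈ A ∧ v ∈ B) ∨ (u ∈ B ∧ v ∈ A) := by
      intro u v; exact hadj u (Set.mem_univ u) v (Set.mem_univ v)
    constructor
    · rintro ⟨a, b, c, hab, hbc, hca⟩
      rw [h] at hab hbc hca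
      rcases hab with ⟨ha, hb⟩ | ⟨ha, hb⟩ <;> rcases hbc with ⟨hb', hc⟩ | ⟨hb', hc⟩ <;>
        rcases hca with ⟨hc', ha'⟩ | ⟨hc', ha'⟩ <;>
        first
          | exact hd _ ha ha'
          | exact hd _ ha' ha
          | exact hd _ hb hb'
          | exact hd _ hb' hb
          | exact hd _ hc hc'
          | exact hd _ hc' hc
    · rintro ⟨a, b, c, d, hab, hbc, hcd, _, _, had, _⟩
      apply had
      rw [h] at hab hbc hcd ⊢
      rcases hab with ⟨ha, hb⟩ | ⟨ha, hb⟩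
      · rcases hbc with ⟨hb', hc⟩ | ⟨hb', hc⟩
        · exact absurd hb' (hd _ · hb)
        · rcases hcd with ⟨hc', hd'⟩ | ⟨hc', hd'⟩
          · exact Or.inl ⟨ha, hd'⟩
          · exact (hd _ hc hc').elim
      · rcases hbc with ⟨hb', hc⟩ | ⟨hb', hc⟩
        · rcases hcd with ⟨hc', hd'⟩ | ⟨hc', hd'⟩
          · exact (hd _ hc' hc).elim
          · exact Or.inr ⟨ha, hd'⟩
        · exact (hd _ hb hb').elim
  · rintro ⟨htri, hp4⟩
    -- pick a vertex v
    have hne : Nonempty V := Fintype.card_pos_iff.mp (by omega)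
    obtain ⟨v⟩ := hne
    -- B = neighbors of v, A = complement
    refine ⟨{x | ¬ G.Adj v x}, {x | G.Adj v x}, ?_, ?_, ?_⟩
    · ext x; simp [em']
    · rw [Set.disjoint_left]; intro x hx hx'; exact hx hx'
    · -- diameter ≤ 2 claim
      have key' : ∀ {x y : V} (p : G.Walk x y),
          x = y ∨ G.Adj y x ∨ ∃ w, G.Adj y w ∧ G.Adj w x := by
        intro x y p
        induction p with
        | nil => exact Or.inl rfl
        | @cons b c d hadj p ih =>
          rcases ih with rfl | hdc | ⟨w, hdw, hwc⟩
          · exact Or.inr (Or.inl hadj.symm)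
          · exact Or.inr (Or.inr ⟨c, hdc, hadj.symm⟩)
          · by_cases hdb : G.Adj d b
            · exact Or.inr (Or.inl hdb)
            · by_cases hdc2 : G.Adj d c
              · exact Or.inr (Or.inr ⟨c, hdc2, hadj.symm⟩)
              · by_cases hwb : G.Adj w b
                · exact Or.inr (Or.inr ⟨w, hdw, hwb⟩)
                · exfalso
                  apply hp4
                  refine ⟨d, w, c, b, hdw, hwc, hadj.symm, hdc2, hwb, hdb, ?_, ?_, ?_⟩
                  · rintro rfl; exact hdb hadj.symm
                  · rintro rfl; exact hdb hdw
                  · rintro rfl; exact hdc2 hadj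
      have key : ∀ a : V, a = v ∨ G.Adj v a ∨ ∃ w, G.Adj v w ∧ G.Adj w a := by
        intro a
        obtain ⟨p⟩ := (hconn a v)
        exact key' p
      -- B is "independent": neighbors of v are pairwise nonadjacent
      have hBind : ∀ b c, G.Adj v b → G.Adj v c → ¬ G.Adj b c := by
        intro b c hb hc hbc
        exact htri ⟨v, b, c, hb, hbc, hc.symm⟩
      -- every non-neighbor a ≠ v of v is adjacent to all neighbors of v
      have hAll : ∀ a, a ≠ v → ¬ G.Adj v a → ∀ b, G.Adj v b → G.Adj a b := by
        intro a hav hva b hvb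
        rcases key a with rfl | h | ⟨w, hvw, hwa⟩
        · exact absurd rfl hav
        · exact absurd h hva
        · by_cases hab : G.Adj a b
          · exact hab
          · exfalso
            apply hp4
            refine ⟨a, w, v, b, hwa.symm, hvw.symm, hvb, fun h => hva h.symm,
              hBind w b hvw hvb, hab, ?_, ?_, ?_⟩
            · exact hav
            · rintro rfl; exact hab hwa.symm
            · rintro rfl; exact hva hvb
      intro u _ w _
      constructor
      · intro huw
        by_cases hu : G.Adj v u <;> by_cases hw : G.Adj v w
        · exact absurd huw (hBind u w hu hw)
        · exact Or.inr ⟨hu, hw⟩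
        · exact Or.inl ⟨hu, hw⟩
        · -- both in A: contradiction
          exfalso
          rcases eq_or_ne u v with rfl | huv
          · exact hw huw
          rcases eq_or_ne w v with rfl | hwv
          · exact hu huw.symm
          -- u, w ≠ v, both nonadjacent to v, adjacent to each other: triangle with a neighbor of v
          obtain ⟨b, hvb⟩ : ∃ b, G.Adj v b := by
            obtain ⟨x, hx⟩ : ∃ x : V, x ≠ v := Fintype.exists_ne_of_one_lt_card (by omega) v
            rcases key x with rfl | h | ⟨w', hvw', _⟩
            · exact absurd rfl hx
            · exact ⟨x, h⟩
            · exact ⟨w', hvw'⟩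
          have h1 := hAll u huv hu b hvb
          have h2 := hAll w hwv hw b hvb
          exact htri ⟨u, w, b, huw, h2, h1.symm⟩
      · rintro (⟨hu, hw⟩ | ⟨hu, hw⟩)
        · rcases eq_or_ne u v with rfl | huv
          · exact hw
          · exact hAll u huv hu w hw
        · rcases eq_or_ne w v with rfl | hwv
          · exact hu.symm
          · exact (hAll w hwv hw u hu).symm
end
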